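/- arXiv:2305.16001 — 4 statements merged into one kernel-verified Lean document; each statement's English description precedes it below -/
import Mathlib

section
/- For any rooted tree and the function φ_n defined on its nodes by φ_n(u) = H({φ_n(c) : c child of u}) if depth(u) < n, φ_n(u) = (number of children of u) if depth(u) = n, and φ_n(u) = 0 otherwise, it holds that φ_n(u) ≥ φ_{n+1}(u) for every node u. -/
/-- The H operator: maximum `i` such that at least `i` elements of `S` are `≥ i`. -/
def Hop (S : Multiset ℕ) : ℕ :=
  Nat.findGreatest (fun i => i ≤ (S.filter (fun s => i ≤ s)).card) S.card

/-- Finite rooted trees. -/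
inductive RTree where
  | node : List RTree → RTree

/-- `rphi m u` is `φ_n(u)` for a node `u` at depth `d(u)` in the tree, where
`m = n - d(u)` is the remaining depth budget: `φ_n(u) = |C(u)|` when `d(u) = n`
(budget `0`), and `φ_n(u) = H({φ_n(c) : c ∈ C(u)})` when `d(u) < n`. -/
def rphi : ℕ → RTree → ℕ
  | 0, .node cs => cs.length
  | m + 1, .node cs => Hop ↑(cs.map (rphi m))


lemma hop_le_card (S : Multiset ℕ) : Hop S ≤ S.card :=
  Nat.findGreatest_le _

lemma filter_card_mono {a b : List ℕ} (h : List.Forall₂ (· ≤ ·) a b) (i : ℕ) :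
    ((a : Multiset ℕ).filter (fun s => i ≤ s)).card ≤
    ((b : Multiset ℕ).filter (fun s => i ≤ s)).card := by
  induction h with
  | nil => exact le_refl _
  | cons hxy _ ih =>
      rename_i x y l1 l2 _
      show (Multiset.filter (fun s => i ≤ s) (x ::ₘ (↑l1 : Multiset ℕ))).card ≤
        (Multiset.filter (fun s => i ≤ s) (y ::ₘ (↑l2 : Multiset ℕ))).card
      rw [Multiset.filter_cons, Multiset.filter_cons]
      by_cases hx : i ≤ x
      · rw [if_pos hx, if_pos (le_trans hx hxy)]
        simpa using ih
      · rw [if_neg hx]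
        refine le_trans ih ?_
        split <;> simp

lemma hop_mono {a b : List ℕ} (h : List.Forall₂ (· ≤ ·) a b) :
    Hop (a : Multiset ℕ) ≤ Hop (b : Multiset ℕ) := by
  have hlen : a.length = b.length := h.length_eq
  apply Nat.findGreatest_mono
  · intro i hi
    exact le_trans hi (filter_card_mono h i)
  · simpa using hlen.le

/-- `φ_n(u) ≥ φ_{n+1}(u)` for every node `u` (a node at depth `d` in the tree rooted
at `t` has budget `m = n - d`, so quantifying over all subtrees `t` and budgets `m`
covers all nodes of depth ≤ n). -/
theorem rphi_antitone (m : ℕ) (t : RTree) : rphi (m + 1) t ≤ rphi m t := by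
  induction m generalizing t with
  | zero =>
      obtain ⟨cs⟩ := t
      simpa [rphi] using le_trans (hop_le_card _) (by simp)
  | succ k ih =>
      obtain ⟨cs⟩ := t
      show Hop ↑(cs.map (rphi (k + 1))) ≤ Hop ↑(cs.map (rphi k))
      exact hop_mono (by
        rw [List.forall₂_map_right_iff, List.forall₂_map_left_iff]
        exact List.forall₂_same.mpr fun c _ => ih c)
end

section
/- If the root r of a finite rooted tree satisfies φ_n(r) = k as defined via the H operator, then every node u of Γ with depth d(u) ≤ j ≤ n reachable along a chain of nodes witnessing the H-value has at least k children; in particular, if φ_n(r) ≥ k for k ≥ 2, then r has at least (k^{n+2} − k)/(k − 1) descendants of depth at most n+1. -/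
/-- `descCount m t` is the number of nodes of `t` of depth between `1` and `m`
(inclusive), i.e. the number of proper descendants of the root up to depth `m`. -/
def descCount : ℕ → RTree → ℕ
  | 0, _ => 0
  | m + 1, .node cs => cs.length + (cs.map (descCount m)).sum

/-- Geometric sum `k + k^2 + ... + k^(n+1)`. -/
def gsum (k : ℕ) : ℕ → ℕ
  | 0 => k
  | n + 1 => k + k * gsum k n

lemma gsum_eq (m : ℕ) : ∀ n, m * gsum (m + 1) n + (m + 1) = (m + 1) ^ (n + 2)
  | 0 => by simp [gsum]; ring
  | n + 1 => by
    have ih := gsum_eq m n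
    simp only [gsum]
    calc m * ((m+1) + (m+1) * gsum (m+1) n) + (m+1)
        = (m+1) * (m * gsum (m+1) n + (m+1)) := by ring
      _ = (m+1) * (m+1)^(n+2) := by rw [ih]
      _ = (m+1)^(n+3) := by ring

lemma hop_card {k : ℕ} {S : Multiset ℕ} (h : k ≤ Hop S) :
    k ≤ (S.filter (fun s => k ≤ s)).card := by
  rcases Nat.eq_zero_or_pos k with rfl | hk
  · exact Nat.zero_le _
  have hP : Hop S ≤ (S.filter (fun s => Hop S ≤ s)).card :=
    Nat.findGreatest_of_ne_zero
      (P := fun i => i ≤ (S.filter (fun s => i ≤ s)).card) rfl (by omega)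
  calc k ≤ Hop S := h
    _ ≤ (S.filter (fun s => Hop S ≤ s)).card := hP
    _ ≤ (S.filter (fun s => k ≤ s)).card := by
        exact Multiset.card_le_card (Multiset.monotone_filter_right S
          (fun s hs => le_trans h hs))

lemma multiset_sum_le_sum {s t : Multiset ℕ} (h : s ≤ t) : s.sum ≤ t.sum := by
  obtain ⟨u, rfl⟩ := Multiset.le_iff_exists_add.mp h
  simp

lemma main_lemma (k : ℕ) : ∀ n t, k ≤ rphi n t → gsum k n ≤ descCount (n + 1) t := by
  intro n
  induction n with
  | zero =>
    rintro ⟨cs⟩ h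
    simp only [rphi] at h
    simp only [descCount, gsum]
    omega
  | succ n ih =>
    rintro ⟨cs⟩ h
    simp only [rphi] at h
    have hcard := hop_card h
    set F : Multiset RTree := (↑cs : Multiset RTree).filter (fun c => k ≤ rphi n c) with hF
    have hcardF : k ≤ Multiset.card F := by
      rwa [show ((↑(cs.map (rphi n)) : Multiset ℕ)) = Multiset.map (rphi n) ↑cs by simp,
        Multiset.filter_map, Multiset.card_map] at hcard
    have hFle : Multiset.card F ≤ cs.length := by
      simpa [hF] using Multiset.card_le_card (Multiset.filter_le _ (↑cs : Multiset RTree))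
    -- Sum bound
    have hsum : k * gsum k n ≤ (cs.map (descCount (n + 1))).sum := by
      have h1 : (Multiset.card F) * gsum k n ≤ (F.map (descCount (n + 1))).sum := by
        have := Multiset.card_nsmul_le_sum (s := F.map (descCount (n + 1)))
          (a := gsum k n) ?_
        · simpa [Multiset.card_map, smul_eq_mul] using this
        · intro x hx
          obtain ⟨c, hc, rfl⟩ := Multiset.mem_map.mp hx
          rw [hF] at hc
          exact ih c (Multiset.mem_filter.mp hc).2
      have h2 : (F.map (descCount (n + 1))).sum ≤
          ((↑cs : Multiset RTree).map (descCount (n + 1))).sum :=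
        multiset_sum_le_sum (Multiset.map_le_map (Multiset.filter_le _ _))
      have h3 : ((↑cs : Multiset RTree).map (descCount (n + 1))).sum =
          (cs.map (descCount (n + 1))).sum := by simp
      calc k * gsum k n ≤ (Multiset.card F) * gsum k n :=
            Nat.mul_le_mul_right _ hcardF
        _ ≤ (F.map (descCount (n + 1))).sum := h1
        _ ≤ _ := h3 ▸ h2
    simp only [descCount, gsum]
    have : k ≤ cs.length := le_trans hcardF hFle
    omega

/-- If `φ_n(r) ≥ k` with `k ≥ 2` for the root `r` of a finite rooted tree, then `r`
has at least `(k^(n+2) - k)/(k-1)` descendants of depth at most `n + 1`. -/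
theorem rphi_descendants (k n : ℕ) (hk : 2 ≤ k) (t : RTree) (h : k ≤ rphi n t) :
    (k ^ (n + 2) - k) / (k - 1) ≤ descCount (n + 1) t := by
  obtain ⟨m, rfl⟩ : ∃ m, k = m + 1 := ⟨k - 1, by omega⟩
  have hg := gsum_eq m n
  have hdiv : ((m + 1) ^ (n + 2) - (m + 1)) / (m + 1 - 1) = gsum (m + 1) n := by
    have hm : 0 < m := by omega
    have : (m + 1) ^ (n + 2) - (m + 1) = m * gsum (m + 1) n := by omega
    rw [this, show m + 1 - 1 = m from rfl, Nat.mul_div_cancel_left _ hm]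
  rw [hdiv]
  exact main_lemma (m + 1) n t h
end

section
/- In the reachability tree Γ(v) of a node v in a temporal network, the value φ_n(u) of any tree node u = (w, t) with depth d(u) ≤ n equals the time-dependent temporal H-index h^{(n−d(u))}(w, t) of w at time t in the network. -/
/-- A temporal edge `(u, v, t, λ)`: from `u` to `v`, availability time `t`, transition time `λ`. -/
abbrev TEdge (V : Type) := V × V × ℕ × ℕ

/-- The temporal edges leaving `v` with availability time at least `t`. -/
def outEdges {V : Type} [DecidableEq V] (E : Multiset (TEdge V)) (v : V) (t : ℕ) :
    Multiset (TEdge V) :=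
  E.filter (fun e => e.1 = v ∧ t ≤ e.2.2.1)

/-- Time-dependent out-degree `δ⁺(v, t)`. -/
def tdOutDeg {V : Type} [DecidableEq V] (E : Multiset (TEdge V)) (v : V) (t : ℕ) : ℕ :=
  (outEdges E v t).card

/-- The time-dependent outward `n`-th order temporal H-index `h^{(n)}(v, t)`. -/
def thIndex {V : Type} [DecidableEq V] (E : Multiset (TEdge V)) : ℕ → V → ℕ → ℕ
  | 0, v, t => tdOutDeg E v t
  | n + 1, v, t => Hop ((outEdges E v t).map (fun e => thIndex E n e.2.1 (e.2.2.1 + e.2.2.2)))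

/-- Labeled rooted trees whose nodes carry a pair (node, time). -/
inductive LTree (V : Type) where
  | node : V × ℕ → List (LTree V) → LTree V

/-- The label (node, time) at the root of a labeled tree. -/
def LTree.label {V : Type} : LTree V → V × ℕ
  | .node l _ => l

/-- `Unfolds E T` : `T` is (a subtree of) the reachability tree of the temporal network:
the children of a node labeled `(v, t)` correspond exactly (as a multiset) to the
temporal edges `(v, w, t', λ)` with `t' ≥ t`, the child being labeled `(w, t' + λ)`. -/
inductive Unfolds {V : Type} [DecidableEq V] (E : Multiset (TEdge V)) : LTree V → Prop where
  | mk (v : V) (t : ℕ) (cs : List (LTree V)) :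
      (↑(cs.map LTree.label) : Multiset (V × ℕ)) =
        (outEdges E v t).map (fun e => (e.2.1, e.2.2.1 + e.2.2.2)) →
      (∀ c ∈ cs, Unfolds E c) →
      Unfolds E (.node (v, t) cs)

/-- `lphi m u` is `φ_n(u)` at a node of depth `d(u)` in the reachability tree, where
`m = n - d(u)`: the number of children at budget `0`, else the H operator of the
children's values. -/
def lphi {V : Type} : ℕ → LTree V → ℕ
  | 0, .node _ cs => cs.length
  | m + 1, .node _ cs => Hop ↑(cs.map (lphi m))

/-- In the reachability tree of a temporal network, the value `φ_n(u)` of any tree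
node `u = (w, t)` of depth `d(u) ≤ n` equals `h^{(n - d(u))}(w, t)`; here `u` is the
root of an unfolding subtree `T` and `m = n - d(u)`. -/
theorem lphi_eq_thIndex {V : Type} [DecidableEq V] (E : Multiset (TEdge V))
    (T : LTree V) (hT : Unfolds E T) (m : ℕ) :
    lphi m T = thIndex E m T.label.1 T.label.2 := by
  induction m generalizing T with
  | zero =>
    obtain ⟨v, t, cs, hmap, hch⟩ := hT
    simp only [lphi, LTree.label, thIndex, tdOutDeg]
    have := congrArg Multiset.card hmap
    simpa using this
  | succ m ih =>
    obtain ⟨v, t, cs, hmap, hch⟩ := hT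
    simp only [lphi, LTree.label, thIndex]
    congr 1
    have h1 : (cs.map (lphi m) : Multiset ℕ)
        = (↑(cs.map LTree.label) : Multiset (V × ℕ)).map
            (fun p => thIndex E m p.1 p.2) := by
      simp only [Multiset.map_coe, List.map_map]
      congr 1
      apply List.map_congr_left
      intro c hc
      exact ih c (hch c hc)
    rw [h1, hmap, Multiset.map_map]
    rfl
end

section
/- In a temporal network with uniform transition time λ = 1 for all edges, the outward n-th order temporal H-index of node v in the temporal transpose T(G) (where each edge (u,v,t,1) is replaced by (v,u,t_max − t,1) with t_max = max over edges of t + 1) equals the inward n-th order temporal H-index of v in G, for all n ≥ 0. -/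
/-- The temporal edges arriving at `v` with arrival time `t' + λ ≤ t`. -/
def inEdges {V : Type} [DecidableEq V] (E : Multiset (TEdge V)) (v : V) (t : ℕ) :
    Multiset (TEdge V) :=
  E.filter (fun e => e.2.1 = v ∧ e.2.2.1 + e.2.2.2 ≤ t)

/-- The time-dependent inward `n`-th order temporal H-index `h⁻^{(n)}(v, t)`. -/
def thIndexIn {V : Type} [DecidableEq V] (E : Multiset (TEdge V)) : ℕ → V → ℕ → ℕ
  | 0, v, t => (inEdges E v t).card
  | n + 1, v, t => Hop ((inEdges E v t).map (fun e => thIndexIn E n e.1 e.2.2.1))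

/-- `t_max = max{t + λ : (u,v,t,λ) ∈ E}`; evaluating the inward index at `t_max`
imposes no upper time restriction. -/
def tmax {V : Type} (E : Multiset (TEdge V)) : ℕ :=
  (E.map (fun e => e.2.2.1 + e.2.2.2)).sup

/-- The temporal transpose: each edge `(u, v, t, λ)` is replaced by
`(v, u, t_max − t, λ)`. -/
def transpose {V : Type} (E : Multiset (TEdge V)) : Multiset (TEdge V) :=
  E.map (fun e => (e.2.1, e.1, tmax E - e.2.2.1, e.2.2.2))

lemma arrival_le {V : Type} {E : Multiset (TEdge V)} {e : TEdge V} (he : e ∈ E) :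
    e.2.2.1 + e.2.2.2 ≤ tmax E :=
  Multiset.le_sup (Multiset.mem_map_of_mem _ he)

lemma inEdges_stable {V : Type} [DecidableEq V] (E : Multiset (TEdge V)) (v : V)
    {s : ℕ} (hs : tmax E ≤ s) : inEdges E v s = inEdges E v (tmax E) := by
  unfold inEdges
  apply Multiset.filter_congr
  intro e he
  have h := arrival_le he
  constructor <;> rintro ⟨h1, h2⟩ <;> exact ⟨h1, by omega⟩

lemma thIndexIn_stable {V : Type} [DecidableEq V] (E : Multiset (TEdge V)) (n : ℕ) (v : V)
    {s : ℕ} (hs : tmax E ≤ s) : thIndexIn E n v s = thIndexIn E n v (tmax E) := by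
  cases n <;> simp only [thIndexIn, inEdges_stable E v hs]

lemma key_filter {V : Type} [DecidableEq V] (E : Multiset (TEdge V))
    (huni : ∀ e ∈ E, e.2.2.2 = 1) (v : V) (t : ℕ) :
    outEdges (transpose E) v t =
      (inEdges E v (tmax E + 1 - t)).map
        (fun e => (e.2.1, e.1, tmax E - e.2.2.1, e.2.2.2)) := by
  unfold outEdges transpose inEdges
  rw [Multiset.filter_map]
  congr 1
  apply Multiset.filter_congr
  intro e he
  have h := arrival_le he
  have h1 := huni e he
  simp only [Function.comp]
  constructor <;> rintro ⟨ha, hb⟩ <;> exact ⟨ha, by omega⟩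

lemma key {V : Type} [DecidableEq V] (E : Multiset (TEdge V))
    (huni : ∀ e ∈ E, e.2.2.2 = 1) :
    ∀ (n : ℕ) (v : V) (t : ℕ),
      thIndex (transpose E) n v t = thIndexIn E n v (tmax E + 1 - t) := by
  intro n
  induction n with
  | zero =>
    intro v t
    simp only [thIndex, thIndexIn, tdOutDeg, key_filter E huni, Multiset.card_map]
  | succ n ih =>
    intro v t
    simp only [thIndex, thIndexIn, key_filter E huni, Multiset.map_map]
    congr 1
    apply Multiset.map_congr rfl
    intro e he
    have heE : e ∈ E := Multiset.mem_of_mem_filter he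
    have h := arrival_le heE
    have h1 := huni e heE
    simp only [Function.comp]
    rw [ih]
    congr 1
    omega

/-- In a temporal network with uniform transition time `λ = 1`, the outward `n`-th
order temporal H-index of `v` in the temporal transpose `T(G)` equals the inward
`n`-th order temporal H-index of `v` in `G`, for all `n ≥ 0`. -/
theorem transpose_thIndex {V : Type} [DecidableEq V] (E : Multiset (TEdge V))
    (huni : ∀ e ∈ E, e.2.2.2 = 1) (n : ℕ) (v : V) :
    thIndex (transpose E) n v 0 = thIndexIn E n v (tmax E) := by
  rw [key E huni n v 0]
  exact thIndexIn_stable E n v (by omega)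
end
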